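/- arXiv:2501.10921 — 4 statements merged into one kernel-verified Lean document; each statement's English description precedes it below -/
import Mathlib

section
/- Let Γ be a doubly regular (m,r)-team semicomplete multipartite digraph with partite sets V₁,…,V_m. For every pair i≠j and all vertices x∈V_i and y∈V_j, one has |E_j(x)|=|E_i(y)|. Consequently |E_j(x)| does not depend on the choice of x∈V_i, and the common values satisfy e_{ij}=e_{ji}. -/
open Set Matrix

namespace Paper

variable {V : Type*} {W : Type*}

/-- There is a directed walk of length `n` from `x` to `y` in the digraph with arc relation `A`. -/
def HasPathOfLength (A : V → V → Prop) (x y : V) (n : ℕ) : Prop :=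
  ∃ p : ℕ → V, p 0 = x ∧ p n = y ∧ ∀ i < n, A (p i) (p (i + 1))

/-- A digraph is strongly connected if there is a directed path between any two vertices. -/
def IsStronglyConnected (A : V → V → Prop) : Prop :=
  ∀ x y, ∃ n, HasPathOfLength A x y n

/-- The distance `∂(x,y)`: the length of a shortest directed path from `x` to `y`. -/
noncomputable def ddist (A : V → V → Prop) (x y : V) : ℕ :=
  sInf {n | HasPathOfLength A x y n}

/-- The two-way distance `∂̃(x,y) = (∂(x,y), ∂(y,x))`. -/
noncomputable def tdist (A : V → V → Prop) (x y : V) : ℕ × ℕ :=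
  (ddist A x y, ddist A y x)

/-- The two-way distance set `∂̃(Γ)`. -/
def tdistSet (A : V → V → Prop) : Set (ℕ × ℕ) :=
  {d | ∃ x y, tdist A x y = d}

/-- The number `p_{ĩ,j̃}(x,y) = |{z : ∂̃(x,z) = ĩ, ∂̃(z,y) = j̃}|`. -/
noncomputable def pnum (A : V → V → Prop) (i j : ℕ × ℕ) (x y : V) : ℕ :=
  {z | tdist A x z = i ∧ tdist A z y = j}.ncard

/-- A weakly distance-regular digraph. -/
def IsWDRD (A : V → V → Prop) : Prop :=
  IsStronglyConnected A ∧
  (∃ d ∈ tdistSet A, d.1 ≠ d.2) ∧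
  ∀ i j : ℕ × ℕ, ∀ x y x' y' : V,
    tdist A x y = tdist A x' y' → pnum A i j x y = pnum A i j x' y'

/-- Commutativity of the attached scheme: `p_{ĩ,j̃}^{h̃} = p_{j̃,ĩ}^{h̃}`. -/
def IsCommutativeDigraph (A : V → V → Prop) : Prop :=
  ∀ i j : ℕ × ℕ, ∀ x y : V, pnum A i j x y = pnum A j i x y

/-- A commutative weakly distance-regular digraph. -/
def IsCWDRD (A : V → V → Prop) : Prop :=
  IsWDRD A ∧ IsCommutativeDigraph A

/-- `A` is semicomplete multipartite with partition given by `f` (parts are the fibres). -/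
def IsSemicompleteMultipartiteWith (A : V → V → Prop) {m : ℕ} (f : V → Fin m) : Prop :=
  (∀ x, ¬ A x x) ∧ (∀ i, 2 ≤ {x | f x = i}.ncard) ∧
  ∀ x y : V, x ≠ y → ((A x y ∨ A y x) ↔ f x ≠ f y)

/-- A semicomplete multipartite digraph: the vertex set is partitioned into `m ≥ 2` partite
sets, each of size at least `2`, and two distinct vertices are joined by an arc in at least
one direction iff they lie in different partite sets. -/
def IsSemicompleteMultipartite (A : V → V → Prop) : Prop :=
  ∃ m : ℕ, 2 ≤ m ∧ ∃ f : V → Fin m, IsSemicompleteMultipartiteWith A f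

/-- A semicomplete digraph: any two distinct vertices are joined by an arc in
at least one direction. -/
def IsSemicomplete (A : V → V → Prop) : Prop :=
  (∀ x, ¬ A x x) ∧ ∀ x y : V, x ≠ y → A x y ∨ A y x

/-- A circuit of length `n`: a sequence `w₀,…,w_{n-1}` with consecutive arcs and an arc
from `w_{n-1}` back to `w₀`. -/
def HasCircuitOfLength (A : V → V → Prop) (n : ℕ) : Prop :=
  ∃ p : ℕ → V, p n = p 0 ∧ ∀ i < n, A (p i) (p (i + 1))

/-- The girth: the length of a shortest circuit. -/
noncomputable def girth (A : V → V → Prop) : ℕ :=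
  sInf {n | 1 ≤ n ∧ HasCircuitOfLength A n}

/-- Lexicographic product of digraphs. -/
def lexProd (A : V → V → Prop) (B : W → W → Prop) : V × W → V × W → Prop :=
  fun u v => A u.1 v.1 ∨ (u.1 = v.1 ∧ B u.2 v.2)

/-- The `n`-coclique extension of a digraph: `A ∘ K̄ₙ`. -/
def cocliqueExt (A : V → V → Prop) (n : ℕ) : V × Fin n → V × Fin n → Prop :=
  lexProd A (fun _ _ : Fin n => False)

/-- Isomorphism of digraphs. -/
def Iso (A : V → V → Prop) (B : W → W → Prop) : Prop :=
  ∃ e : V ≃ W, ∀ x y : V, A x y ↔ B (e x) (e y)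

/-- An `(m,r)`-team semicomplete multipartite digraph with partite sets the fibres of `f`:
`m ≥ 2` parts, each of size `r ≥ 2`. -/
def IsTeamSMD (A : V → V → Prop) {m : ℕ} (f : V → Fin m) (r : ℕ) : Prop :=
  2 ≤ m ∧ 2 ≤ r ∧ (∀ x, ¬ A x x) ∧ (∀ i : Fin m, {x | f x = i}.ncard = r) ∧
  ∀ x y : V, x ≠ y → ((A x y ∨ A y x) ↔ f x ≠ f y)

/-- Regular of valency `k`: every vertex has exactly `k` out-neighbours and `k`
in-neighbours. -/
def IsRegularOfValency (A : V → V → Prop) (k : ℕ) : Prop :=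
  ∀ x : V, {y | A x y}.ncard = k ∧ {y | A y x}.ncard = k

open Classical in
/-- Adjacency matrix of the symmetric part `EΓ`. -/
noncomputable def matE (A : V → V → Prop) : Matrix V V ℤ :=
  Matrix.of fun x y => if A x y ∧ A y x then 1 else 0

open Classical in
/-- Adjacency matrix of the asymmetric part `A⃗Γ`. -/
noncomputable def matAr (A : V → V → Prop) : Matrix V V ℤ :=
  Matrix.of fun x y => if A x y ∧ ¬ A y x then 1 else 0

open Classical in
/-- Adjacency matrix of a digraph. -/
noncomputable def matAdj (A : V → V → Prop) : Matrix V V ℤ :=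
  Matrix.of fun x y => if A x y then 1 else 0

/-- The all-ones matrix `J`. -/
def matJ (V : Type*) : Matrix V V ℤ := Matrix.of fun _ _ => 1

open Classical in
/-- The matrix equations in the definition of a doubly regular team semicomplete multipartite
digraph, with constants `t, αᵢ, βᵢ, γᵢ, ηᵢ` (`A₀ = matE A`, `A₁ = matAr A`). -/
def DRConstEq [Fintype V] (A : V → V → Prop) (t : ℤ) (α β γ η : ℕ → ℤ) : Prop :=
  ∀ i j : Fin 2,
    ![matE A, matAr A] i * ![matE A, matAr A] j =
      (if (i : ℕ) + (j : ℕ) = 0 then t else 0) • (1 : Matrix V V ℤ) +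
      α ((i : ℕ) + (j : ℕ)) • matAr A +
      β ((i : ℕ) + (j : ℕ)) • (matAr A)ᵀ +
      γ ((i : ℕ) + (j : ℕ)) • matE A +
      η ((i : ℕ) + (j : ℕ)) • (matJ V - 1 - matAr A - (matAr A)ᵀ - matE A)

/-- A doubly regular `(m,r)`-team semicomplete multipartite digraph. -/
def IsDoublyRegularTeamSMD [Fintype V] (A : V → V → Prop) {m : ℕ} (f : V → Fin m)
    (r : ℕ) : Prop :=
  IsTeamSMD A f r ∧ (∃ k, IsRegularOfValency A k) ∧
  ∃ t α β γ η, DRConstEq A t α β γ η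

/-- `A_j⁺(x)`: out-neighbours of `x` in the part `j` via single arcs. -/
def Aplus (A : V → V → Prop) {m : ℕ} (f : V → Fin m) (j : Fin m) (x : V) : Set V :=
  {y | f y = j ∧ A x y ∧ ¬ A y x}

/-- `E_j(x)`: neighbours of `x` in the part `j` via edges (pairs of opposite arcs). -/
def Epart (A : V → V → Prop) {m : ℕ} (f : V → Fin m) (j : Fin m) (x : V) : Set V :=
  {y | f y = j ∧ A x y ∧ A y x}

/-- Type I: `β₁+β₂-α₁-α₂ = r` and the digraph is an `r`-coclique extension of a
semicomplete digraph. -/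
def TypeI (A : V → V → Prop) (r : ℕ) (α β : ℕ → ℤ) : Prop :=
  β 1 + β 2 - α 1 - α 2 = (r : ℤ) ∧
  ∃ (N : ℕ) (S : Fin N → Fin N → Prop),
    1 ≤ N ∧ IsSemicomplete S ∧ Iso A (cocliqueExt S r)

/-- Type II: `β₁+β₂-α₁-α₂ = 0` and `c_{ij} = c_{ji} = (r - e_{ij})/2` for all pairs `i ≠ j`. -/
def TypeII (A : V → V → Prop) {m : ℕ} (f : V → Fin m) (r : ℕ) (α β : ℕ → ℤ) : Prop :=
  β 1 + β 2 - α 1 - α 2 = 0 ∧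
  ∀ i j : Fin m, i ≠ j → ∃ c e : ℕ,
    (∀ x, f x = i → (Aplus A f j x).ncard = c ∧ (Epart A f j x).ncard = e) ∧
    (∀ y, f y = j → (Aplus A f i y).ncard = c) ∧
    c + c + e = r

/-- Condition (ii) of Type III for the ordered pair `(i,j)`: `V_i` splits as
`V_i' ∪ V_i''` with `(V_i' × V_j) ∪ (V_j × V_i'') ⊆ A⃗Γ`. -/
def TypeIIIsplitB (A : V → V → Prop) {m : ℕ} (f : V → Fin m) (i j : Fin m) : Prop :=
  ∃ S : Set V, S ⊆ {x | f x = i} ∧ S.Nonempty ∧ ({x | f x = i} \ S).Nonempty ∧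
    (∀ x ∈ S, ∀ y : V, f y = j → A x y ∧ ¬ A y x) ∧
    (∀ y : V, f y = j → ∀ x ∈ {x | f x = i} \ S, A y x ∧ ¬ A x y)

/-- Condition (iii) of Type III for the pair `(i,j)`. -/
def TypeIIIsplitC (A : V → V → Prop) {m : ℕ} (f : V → Fin m) (i j : Fin m) : Prop :=
  ∃ S T' : Set V,
    S ⊆ {x | f x = i} ∧ S.Nonempty ∧ ({x | f x = i} \ S).Nonempty ∧
    T' ⊆ {y | f y = j} ∧ T'.Nonempty ∧ ({y | f y = j} \ T').Nonempty ∧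
    (∀ x ∈ S, ∀ y ∈ T', A x y ∧ A y x) ∧
    (∀ x ∈ {x | f x = i} \ S, ∀ y ∈ {y | f y = j} \ T', A x y ∧ A y x) ∧
    (∀ x ∈ S, ∀ y ∈ {y | f y = j} \ T', A x y ∧ ¬ A y x) ∧
    (∀ y ∈ T', ∀ x ∈ {x | f x = i} \ S, A y x ∧ ¬ A x y)

/-- Type III. -/
def TypeIII (A : V → V → Prop) {m : ℕ} (f : V → Fin m) (r : ℕ) (α β : ℕ → ℤ) : Prop :=
  2 * (β 1 + β 2 - α 1 - α 2) = (r : ℤ) ∧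
  ∀ i j : Fin m, i ≠ j →
    (∀ x y : V, f x = i → f y = j → A x y ∧ A y x) ∨
    (TypeIIIsplitB A f i j ∨ TypeIIIsplitB A f j i) ∨
    TypeIIIsplitC A f i j

/-- An `(m,r)`-team tournament: an `(m,r)`-team semicomplete multipartite digraph with
no pair of opposite arcs. -/
def IsTeamTournament (A : V → V → Prop) {m : ℕ} (f : V → Fin m) (r : ℕ) : Prop :=
  IsTeamSMD A f r ∧ ∀ x y : V, ¬ (A x y ∧ A y x)

open Classical in
/-- A doubly regular `(m,r)`-team tournament with parameters `(α,β,γ)`: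
`A² = αA + βAᵀ + γ(J - I - A - Aᵀ)`. -/
def IsDRTeamTournament [Fintype V] (A : V → V → Prop) {m : ℕ} (f : V → Fin m) (r : ℕ)
    (α β γ : ℤ) : Prop :=
  IsTeamTournament A f r ∧ (∃ k, IsRegularOfValency A k) ∧
  matAdj A * matAdj A =
    α • matAdj A + β • (matAdj A)ᵀ + γ • (matJ V - 1 - matAdj A - (matAdj A)ᵀ)

/-- Type II of a doubly regular team tournament: `β - α = 0`, `r` even, and
`|N⁺(x) ∩ V_i| = r/2` for every partite set `V_i` and vertex `x ∉ V_i`. -/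
def TournamentTypeII (A : V → V → Prop) {m : ℕ} (f : V → Fin m) (r : ℕ) (α β : ℤ) : Prop :=
  β = α ∧ Even r ∧ ∀ (i : Fin m) (x : V), f x ≠ i → 2 * {y | f y = i ∧ A x y}.ncard = r

/-- The Cayley digraph `Cay(ℤ₆, {1,2})`. -/
def Cay6 : ZMod 6 → ZMod 6 → Prop := fun x y => y - x = 1 ∨ y - x = 2

/-- The directed cycle `C₄`. -/
def C4 : ZMod 4 → ZMod 4 → Prop := fun x y => y = x + 1

/-- in a doubly regular team semicomplete multipartite digraph,
`|E_j(x)| = |E_i(y)|` for all `x ∈ V_i`, `y ∈ V_j` with `i ≠ j`; consequently `|E_j(x)|`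
does not depend on `x ∈ V_i` and `e_{ij} = e_{ji}`. -/
theorem statement_4 {V : Type*} [Fintype V] (A : V → V → Prop) {m : ℕ} (f : V → Fin m)
    (r : ℕ) (h : IsDoublyRegularTeamSMD A f r) (i j : Fin m) (hij : i ≠ j) :
    (∀ x y : V, f x = i → f y = j → (Epart A f j x).ncard = (Epart A f i y).ncard) ∧
    ∃ e : ℕ, (∀ x, f x = i → (Epart A f j x).ncard = e) ∧
      (∀ y, f y = j → (Epart A f i y).ncard = e) := by
  classical
  obtain ⟨⟨hm, hr, hloop, hcard, hadjv⟩, -, t, α, β, γ, η, hDR⟩ := h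
  set A₀ := matE A with hA0
  set A₁ := matAr A with hA1
  have h01 := hDR 0 1
  have h10 := hDR 1 0
  have h00 := hDR 0 0
  simp only [Matrix.cons_val_zero, Matrix.cons_val_one, Matrix.head_cons,
    Fin.val_zero, Fin.val_one, Nat.add_zero, Nat.zero_add, Nat.reduceAdd, reduceIte,
    zero_smul, zero_add] at h01 h10 h00
  have hcomm1 : A₀ * A₁ = A₁ * A₀ := h01.trans h10.symm
  have hsymm : A₀ᵀ = A₀ := by
    ext u v
    simp only [Matrix.transpose_apply, hA0, matE, Matrix.of_apply]
    exact if_congr and_comm rfl rfl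
  have hcomm2 : A₀ * A₁ᵀ = A₁ᵀ * A₀ := by
    have h := congrArg Matrix.transpose hcomm1
    simp only [Matrix.transpose_mul, hsymm] at h
    exact h.symm
  have hdiag : ∀ x : V, (A₀ * A₀) x x = t := by
    intro x
    rw [h00]
    simp only [Matrix.add_apply, Matrix.sub_apply, Matrix.smul_apply, Matrix.one_apply_eq,
      smul_eq_mul, matE, matAr, matJ, Matrix.transpose_apply, Matrix.of_apply, hA0, hA1]
    simp [hloop x]
  have hrow : ∀ x : V, ∑ z, A₀ x z = t := by
    intro x
    have h := hdiag x
    rw [Matrix.mul_apply] at h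
    rw [← h]
    refine Finset.sum_congr rfl fun z _ => ?_
    simp only [hA0, matE, Matrix.of_apply]
    by_cases hc : A x z ∧ A z x
    · rw [if_pos hc, if_pos ⟨hc.2, hc.1⟩]; ring
    · rw [if_neg hc]; ring
  have hA0symm : ∀ u v, A₀ u v = A₀ v u := by
    intro u v; simp only [hA0, matE, Matrix.of_apply]; exact if_congr and_comm rfl rfl
  have hcol : ∀ y : V, ∑ z, A₀ z y = t := by
    intro y; rw [← hrow y]; exact Finset.sum_congr rfl fun z _ => hA0symm z y
  set B : Matrix V V ℤ := Matrix.of fun u v => if f u = f v then 1 else 0 with hB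
  have hBeq : B = matJ V - (A₁ + A₁ᵀ + A₀) := by
    ext u v
    simp only [hB, matJ, Matrix.of_apply, Matrix.sub_apply, Matrix.add_apply,
      Matrix.transpose_apply, hA0, hA1, matE, matAr]
    rcases eq_or_ne u v with rfl | hne
    · simp [hloop u]
    · by_cases hf : f u = f v
      · have hno : ¬(A u v ∨ A v u) := fun hor => (hadjv u v hne).mp hor hf
        push_neg at hno
        simp [hf, hno.1, hno.2]
      · have hor := (hadjv u v hne).mpr hf
        by_cases h1 : A u v <;> by_cases h2 : A v u <;> simp_all
  have hJ : A₀ * matJ V = matJ V * A₀ := by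
    ext x y
    rw [Matrix.mul_apply, Matrix.mul_apply]
    simp only [matJ, Matrix.of_apply, mul_one, one_mul]
    rw [hrow x, hcol y]
  have hM : A₀ * (A₁ + A₁ᵀ + A₀) = (A₁ + A₁ᵀ + A₀) * A₀ := by
    rw [mul_add, mul_add, add_mul, add_mul, hcomm1, hcomm2]
  have hAB : A₀ * B = B * A₀ := by
    rw [hBeq, mul_sub, sub_mul, hJ, hM]
  have hncard : ∀ s : Set V, (s.ncard : ℤ) = ∑ z : V, if z ∈ s then 1 else 0 := by
    intro s
    rw [Finset.sum_boole]
    norm_cast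
    rw [Set.ncard_eq_toFinset_card']
    congr 1
    ext z
    simp
  have main : ∀ x y : V, f x = i → f y = j →
      (Epart A f j x).ncard = (Epart A f i y).ncard := by
    intro x y hx hy
    have h := congrFun (congrFun hAB x) y
    rw [Matrix.mul_apply, Matrix.mul_apply] at h
    have hL : ∑ z, A₀ x z * B z y = ((Epart A f j x).ncard : ℤ) := by
      rw [hncard]
      refine Finset.sum_congr rfl fun z _ => ?_
      simp only [hA0, matE, Matrix.of_apply, hB]
      by_cases hz : z ∈ Epart A f j x
      · obtain ⟨hf1, hf2, hf3⟩ := hz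
        rw [if_pos ⟨hf2, hf3⟩, if_pos (by rw [hf1, hy] : f z = f y)]
        simp [Epart, Set.mem_setOf_eq, hf1, hf2, hf3]
      · rw [if_neg hz]
        by_cases hc : A x z ∧ A z x
        · have hfz : f z ≠ j := fun hfz => hz ⟨hfz, hc.1, hc.2⟩
          rw [if_pos hc, if_neg (fun hh : f z = f y => hfz (by rw [hh, hy]))]
          ring
        · rw [if_neg hc]; ring
    have hR : ∑ z, B x z * A₀ z y = ((Epart A f i y).ncard : ℤ) := by
      rw [hncard]
      refine Finset.sum_congr rfl fun z _ => ?_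
      simp only [hA0, matE, Matrix.of_apply, hB]
      by_cases hz : z ∈ Epart A f i y
      · obtain ⟨hf1, hf2, hf3⟩ := hz
        rw [if_pos (by rw [hx, hf1] : f x = f z), if_pos ⟨hf3, hf2⟩]
        simp [Epart, Set.mem_setOf_eq, hf1, hf2, hf3]
      · rw [if_neg hz]
        by_cases hc : A z y ∧ A y z
        · have hfz : f z ≠ i := fun hfz => hz ⟨hfz, hc.2, hc.1⟩
          rw [if_neg (fun hh : f x = f z => hfz (by rw [← hh, hx]))]
          ring
        · rw [if_neg hc]; ring
    rw [hL, hR] at h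
    exact_mod_cast h
  refine ⟨main, ?_⟩
  have hxi : {x | f x = i}.Nonempty := by
    apply Set.nonempty_of_ncard_ne_zero; rw [hcard i]; omega
  have hyj : {x | f x = j}.Nonempty := by
    apply Set.nonempty_of_ncard_ne_zero; rw [hcard j]; omega
  obtain ⟨x₀, hx₀⟩ := hxi
  obtain ⟨y₀, hy₀⟩ := hyj
  refine ⟨(Epart A f j x₀).ncard, fun x hx => ?_, fun y hy => ?_⟩
  · rw [main x y₀ hx hy₀, ← main x₀ y₀ hx₀ hy₀]
  · exact (main x₀ y hx₀ hy).symm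

end Paper
end

section
/- Let Γ be a doubly regular (m,r)-team semicomplete multipartite digraph with partite sets V₁,…,V_m and constants α₁,α₂,β₁,β₂ from the definition of double regularity. Let x∈V_i and y∈V_j with i≠j. Then: (1) if (x,y)∈A⃗Γ, then |A_j⁺(x)|−|A_i⁺(y)|=β₁+β₂−α₁−α₂; (2) if (x,y)∈EΓ, then |A_j⁺(x)|=|A_i⁺(y)|. -/
open Set Matrix

namespace Paper

variable {V : Type*} {W : Type*}

/-- in a doubly regular team semicomplete multipartite digraph with constants
`α₁,α₂,β₁,β₂`, for `x ∈ V_i`, `y ∈ V_j`, `i ≠ j`: if `(x,y) ∈ A⃗Γ` then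
`|A_j⁺(x)| - |A_i⁺(y)| = β₁+β₂-α₁-α₂`; if `(x,y) ∈ EΓ` then `|A_j⁺(x)| = |A_i⁺(y)|`. -/
theorem statement_5 {V : Type*} [Fintype V] (A : V → V → Prop) {m : ℕ} (f : V → Fin m)
    (r : ℕ) (hteam : IsTeamSMD A f r) (k : ℕ) (hreg : IsRegularOfValency A k)
    (t : ℤ) (α β γ η : ℕ → ℤ) (hdr : DRConstEq A t α β γ η)
    (i j : Fin m) (hij : i ≠ j) (x y : V) (hx : f x = i) (hy : f y = j) :
    (A x y ∧ ¬ A y x →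
      ((Aplus A f j x).ncard : ℤ) - ((Aplus A f i y).ncard : ℤ) =
        β 1 + β 2 - α 1 - α 2) ∧
    (A x y ∧ A y x → (Aplus A f j x).ncard = (Aplus A f i y).ncard) := by
  classical
  subst hx hy
  obtain ⟨hm2, hr2, hirr, hsize, hadj⟩ := hteam
  have hxy : x ≠ y := fun h => hij (by rw [h])
  -- pointwise indicator lemma
  have hI : ∀ z w : V, (1 : ℤ) - matAr A z w - matAr A w z - matE A z w =
      (if f z = f w then 1 else 0) := by
    intro z w
    by_cases hzw : z = w
    · subst hzw; simp [matAr, matE, hirr z]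
    · by_cases hf : f z = f w
      · have hnadj : ¬(A z w ∨ A w z) := fun h => (hadj z w hzw).1 h hf
        push_neg at hnadj
        simp [matAr, matE, hnadj.1, hnadj.2, hf]
      · have hA : A z w ∨ A w z := (hadj z w hzw).2 hf
        simp only [matAr, matE, Matrix.of_apply, if_neg hf]
        by_cases h1 : A z w <;> by_cases h2 : A w z <;>
          simp [h1, h2] <;> tauto
  have hsym0 : ∀ u v : V, matE A u v = matE A v u := by
    intro u v; simp [matE, and_comm]
  have hsplit : ∀ u v : V, matAr A u v + matE A u v = if A u v then (1:ℤ) else 0 := by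
    intro u v
    by_cases h1 : A u v <;> by_cases h2 : A v u <;> simp [matAr, matE, h1, h2]
  -- counting lemma
  have hcount : ∀ u w : V, ((Aplus A f (f w) u).ncard : ℤ) =
      ∑ z, matAr A u z * (if f z = f w then 1 else 0) := by
    intro u w
    have he : (Aplus A f (f w) u) =
        ↑(Finset.univ.filter (fun z => f z = f w ∧ A u z ∧ ¬ A z u)) := by
      ext z; simp [Aplus]
    rw [he, Set.ncard_coe_finset, Finset.card_filter]
    push_cast
    refine Finset.sum_congr rfl fun z _ => ?_
    by_cases h1 : f z = f w <;> by_cases h2 : A u z ∧ ¬ A z u <;>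
      simp [matAr, h1, h2]
  -- row/column sums
  have hrowsum : ∀ w : V, (∑ z, matAr A w z) + (∑ z, matE A w z) = k := by
    intro w
    rw [← Finset.sum_add_distrib]
    have : (∑ z, (matAr A w z + matE A w z)) = ∑ z, (if A w z then (1:ℤ) else 0) :=
      Finset.sum_congr rfl fun z _ => hsplit w z
    rw [this]
    have hc : {z | A w z}.ncard = k := (hreg w).1
    have he : {z | A w z} = ↑(Finset.univ.filter (fun z => A w z)) := by ext z; simp
    rw [he, Set.ncard_coe_finset, Finset.card_filter] at hc
    rw [← hc]; push_cast; rfl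
  have hcolsum : ∀ w : V, (∑ z, matAr A z w) + (∑ z, matE A z w) = k := by
    intro w
    rw [← Finset.sum_add_distrib]
    have : (∑ z, (matAr A z w + matE A z w)) = ∑ z, (if A z w then (1:ℤ) else 0) :=
      Finset.sum_congr rfl fun z _ => hsplit z w
    rw [this]
    have hc : {z | A z w}.ncard = k := (hreg w).2
    have he : {z | A z w} = ↑(Finset.univ.filter (fun z => A z w)) := by ext z; simp
    rw [he, Set.ncard_coe_finset, Finset.card_filter] at hc
    rw [← hc]; push_cast; rfl
  -- part size
  have hpart : ∀ w : V, (∑ z, if f z = f w then (1:ℤ) else 0) = r := by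
    intro w
    have hc : {z | f z = f w}.ncard = r := hsize (f w)
    have he : {z | f z = f w} = ↑(Finset.univ.filter (fun z => f z = f w)) := by ext z; simp
    rw [he, Set.ncard_coe_finset, Finset.card_filter] at hc
    rw [← hc]; push_cast; rfl
  -- abbreviations for atoms
  set A1 : Matrix V V ℤ := matAr A with hA1
  set A0 : Matrix V V ℤ := matE A with hA0
  -- T identities
  have hTgen : ∀ u w : V, f u ≠ f w →
      (∑ z, (A1 u z + A1 z u + A0 u z) * (if f z = f w then (1:ℤ) else 0)) = r := by
    intro u w huw
    rw [← hpart w]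
    refine Finset.sum_congr rfl fun z _ => ?_
    by_cases h1 : f z = f w
    · rw [if_pos h1, mul_one]
      have huz : f u ≠ f z := fun h => huw (h.trans h1)
      have := hI u z
      rw [if_neg huz] at this
      linarith
    · rw [if_neg h1, mul_zero]
  -- expanded T identities
  have hT1 : (∑ z, A1 x z) + (∑ z, A1 z x) + (∑ z, A0 x z)
      - (∑ z, A1 x z * A1 z y) - (∑ z, A1 x z * A1 y z) - (∑ z, A1 x z * A0 z y)
      - (∑ z, A1 z x * A1 z y) - (∑ z, A1 z x * A1 y z) - (∑ z, A1 z x * A0 z y)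
      - (∑ z, A0 x z * A1 z y) - (∑ z, A0 x z * A1 y z) - (∑ z, A0 x z * A0 z y)
      = r := by
    have h := hTgen x y hij
    have hexp : (∑ z, (A1 x z + A1 z x + A0 x z) * (if f z = f y then (1:ℤ) else 0))
        = ∑ z, (A1 x z + A1 z x + A0 x z
          - A1 x z * A1 z y - A1 x z * A1 y z - A1 x z * A0 z y
          - A1 z x * A1 z y - A1 z x * A1 y z - A1 z x * A0 z y
          - A0 x z * A1 z y - A0 x z * A1 y z - A0 x z * A0 z y) := by
      refine Finset.sum_congr rfl fun z _ => ?_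
      rw [← hI z y]; ring
    rw [hexp] at h
    simp only [Finset.sum_sub_distrib, Finset.sum_add_distrib] at h
    linarith
  have hT2 : (∑ z, A1 y z) + (∑ z, A1 z y) + (∑ z, A0 z y)
      - (∑ z, A1 x z * A1 z y) - (∑ z, A1 x z * A1 y z) - (∑ z, A1 x z * A0 z y)
      - (∑ z, A1 z x * A1 z y) - (∑ z, A1 z x * A1 y z) - (∑ z, A1 z x * A0 z y)
      - (∑ z, A0 x z * A1 z y) - (∑ z, A0 x z * A1 y z) - (∑ z, A0 x z * A0 z y)
      = r := by
    have h := hTgen y x (Ne.symm hij)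
    have hexp : (∑ z, (A1 y z + A1 z y + A0 y z) * (if f z = f x then (1:ℤ) else 0))
        = ∑ z, (A1 y z + A1 z y + A0 z y
          - A1 x z * A1 z y - A1 x z * A1 y z - A1 x z * A0 z y
          - A1 z x * A1 z y - A1 z x * A1 y z - A1 z x * A0 z y
          - A0 x z * A1 z y - A0 x z * A1 y z - A0 x z * A0 z y) := by
      refine Finset.sum_congr rfl fun z _ => ?_
      rw [← hI z x, hsym0 y z, hsym0 z x]; ring
    rw [hexp] at h
    simp only [Finset.sum_sub_distrib, Finset.sum_add_distrib] at h
    linarith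
  -- equal row sums of A1 at x and y
  have hs : (∑ z, A1 x z) = (∑ z, A1 y z) := by
    have h1 := hrowsum x
    have h2 := hcolsum x
    have h3 := hrowsum y
    have h4 := hcolsum y
    have h5 : (∑ z, A0 z x) = (∑ z, A0 x z) :=
      Finset.sum_congr rfl fun z _ => hsym0 z x
    have h6 : (∑ z, A0 y z) = (∑ z, A0 z y) :=
      Finset.sum_congr rfl fun z _ => hsym0 y z
    linarith [hT1, hT2]
  -- dr equations at entries
  have hne1 : (1 : Matrix V V ℤ) x y = 0 := Matrix.one_apply_ne hxy
  have hne2 : (1 : Matrix V V ℤ) y x = 0 := Matrix.one_apply_ne hxy.symm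
  have hdr11 := hdr 1 1
  have hdr10 := hdr 1 0
  have h11xy := congrFun (congrFun hdr11 x) y
  have h11yx := congrFun (congrFun hdr11 y) x
  have h10xy := congrFun (congrFun hdr10 x) y
  have h10yx := congrFun (congrFun hdr10 y) x
  simp only [Matrix.cons_val_one, Matrix.head_cons, Matrix.cons_val_zero, Fin.isValue,
    Fin.val_one, Fin.val_zero, Matrix.mul_apply, Matrix.add_apply, Matrix.smul_apply,
    Matrix.sub_apply, Matrix.transpose_apply, matJ, Matrix.of_apply, smul_eq_mul,
    Matrix.zero_apply, hne1, hne2] at h11xy h11yx h10xy h10yx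
  norm_num at h11xy h11yx h10xy h10yx
  rw [← hA1, ← hA0] at h11xy h11yx h10xy h10yx
  -- P expansions
  have hP1 : ((Aplus A f (f y) x).ncard : ℤ) =
      (∑ z, A1 x z) - (∑ z, A1 x z * A1 z y) - (∑ z, A1 x z * A1 y z)
        - (∑ z, A1 x z * A0 z y) := by
    rw [hcount x y]
    have hexp : (∑ z, A1 x z * (if f z = f y then (1:ℤ) else 0))
        = ∑ z, (A1 x z - A1 x z * A1 z y - A1 x z * A1 y z - A1 x z * A0 z y) := by
      refine Finset.sum_congr rfl fun z _ => ?_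
      rw [← hI z y]; ring
    rw [hexp]
    simp only [Finset.sum_sub_distrib]
  have hP2 : ((Aplus A f (f x) y).ncard : ℤ) =
      (∑ z, A1 y z) - (∑ z, A1 z x * A1 y z) - (∑ z, A1 x z * A1 y z)
        - (∑ z, A0 x z * A1 y z) := by
    rw [hcount y x]
    have hexp : (∑ z, A1 y z * (if f z = f x then (1:ℤ) else 0))
        = ∑ z, (A1 y z - A1 z x * A1 y z - A1 x z * A1 y z - A0 x z * A1 y z) := by
      refine Finset.sum_congr rfl fun z _ => ?_
      rw [← hI z x, hsym0 z x]; ring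
    rw [hexp]
    simp only [Finset.sum_sub_distrib]
  -- relate mixed sums to matrix products
  have hM5 : (∑ z, A1 z x * A1 y z) = ∑ z, A1 y z * A1 z x :=
    Finset.sum_congr rfl fun z _ => mul_comm _ _
  have hM8 : (∑ z, A0 x z * A1 y z) = ∑ z, A1 y z * A0 z x :=
    Finset.sum_congr rfl fun z _ => by rw [hsym0 z x]; ring
  have hcxy : A0 x y = A0 y x := hsym0 x y
  rw [← hcxy] at h11yx h10yx
  have hdiff : ((Aplus A f (f y) x).ncard : ℤ) - ((Aplus A f (f x) y).ncard : ℤ)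
      = (β 1 + β 2 - α 1 - α 2) * A1 x y - (β 1 + β 2 - α 1 - α 2) * A1 y x := by
    linear_combination hP1 - hP2 + hs + hM5 + hM8 - h11xy + h11yx - h10xy + h10yx
  constructor
  · rintro ⟨h1, h2⟩
    have ha : A1 x y = 1 := by rw [hA1]; simp [matAr, h1, h2]
    have ha' : A1 y x = 0 := by rw [hA1]; simp [matAr, h2]
    rw [ha, ha'] at hdiff
    linear_combination hdiff
  · rintro ⟨h1, h2⟩
    have ha : A1 x y = 0 := by rw [hA1]; simp [matAr, h1, h2]
    have ha' : A1 y x = 0 := by rw [hA1]; simp [matAr, h1, h2]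
    rw [ha, ha'] at hdiff
    have h0 : ((Aplus A f (f y) x).ncard : ℤ) = ((Aplus A f (f x) y).ncard : ℤ) := by
      linear_combination hdiff
    exact_mod_cast h0

end Paper
end

section
/- Let Γ be a doubly regular (m,r)-team semicomplete multipartite digraph with partite sets V₁,…,V_m. For every pair (i,j) with i≠j, one of the following holds: (1) |A_j⁺(x)| takes the same value c_{ij} for every x∈V_i; (2) V_i is partitioned into two nonempty sets V_i=V_i′∪V_i″ such that (V_i′×V_j)∪(V_j×V_i″)⊆A⃗Γ; (3) V_i and V_j are partitioned into two nonempty sets V_i=V_i′∪V_i″ and V_j=V_j′∪V_j″ such that (V_i′×V_j′)∪(V_i″×V_j″)⊆EΓ and (V_i′×V_j″)∪(V_j′×V_i″)⊆A⃗Γ, where |V_j″|=r/2. -/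
open Set Matrix

namespace Paper

variable {V : Type*} {W : Type*}

section Aux
variable {V : Type*} [Fintype V]

open Classical in
noncomputable def cnt (p : V → Prop) : ℕ := (Finset.univ.filter p).card

open Classical in
lemma cnt_congr (p q : V → Prop) (h : ∀ z, p z ↔ q z) : cnt p = cnt q := by
  unfold cnt
  congr 1
  exact Finset.filter_congr fun z _ => h z

open Classical in
lemma cnt_eq_zero (p : V → Prop) (h : ∀ z, ¬ p z) : cnt p = 0 := by
  unfold cnt
  simp [Finset.filter_eq_empty_iff, h]

open Classical in
lemma cnt_pos_exists (p : V → Prop) (h : 0 < cnt p) : ∃ z, p z := by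
  unfold cnt at h
  obtain ⟨z, hz⟩ := Finset.card_pos.mp h
  exact ⟨z, (Finset.mem_filter.mp hz).2⟩

open Classical in
lemma exists_other (p : V → Prop) (h : 2 ≤ cnt p) (x : V) : ∃ x', p x' ∧ x' ≠ x := by
  unfold cnt at h
  have h' : 1 < (Finset.univ.filter p).card := by omega
  obtain ⟨b, hb, hne⟩ := Finset.exists_mem_ne h' x
  exact ⟨b, (Finset.mem_filter.mp hb).2, hne⟩

open Classical in
lemma cnt_split2 (p q : V → Prop) :
    cnt p = cnt (fun z => p z ∧ q z) + cnt (fun z => p z ∧ ¬ q z) := by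
  unfold cnt
  rw [Finset.card_filter, Finset.card_filter, Finset.card_filter, ← Finset.sum_add_distrib]
  refine Finset.sum_congr rfl fun z _ => ?_
  by_cases hp : p z <;> by_cases hq : q z <;> simp [hp, hq]

lemma cnt_split3 (p q1 q2 q3 : V → Prop)
    (hex : ∀ z, p z → q1 z ∨ q2 z ∨ q3 z)
    (h21 : ∀ z, q2 z → ¬ q1 z) (h31 : ∀ z, q3 z → ¬ q1 z) (h32 : ∀ z, q3 z → ¬ q2 z) :
    cnt p = cnt (fun z => p z ∧ q1 z) + cnt (fun z => p z ∧ q2 z) + cnt (fun z => p z ∧ q3 z) := by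
  rw [cnt_split2 p q1, cnt_split2 (fun z => p z ∧ ¬ q1 z) q2]
  have e1 : cnt (fun z => (p z ∧ ¬ q1 z) ∧ q2 z) = cnt (fun z => p z ∧ q2 z) :=
    cnt_congr _ _ fun z => by
      constructor
      · rintro ⟨⟨hp, -⟩, hq⟩; exact ⟨hp, hq⟩
      · rintro ⟨hp, hq⟩; exact ⟨⟨hp, h21 z hq⟩, hq⟩
  have e2 : cnt (fun z => (p z ∧ ¬ q1 z) ∧ ¬ q2 z) = cnt (fun z => p z ∧ q3 z) :=
    cnt_congr _ _ fun z => by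
      constructor
      · rintro ⟨⟨hp, h1⟩, h2⟩
        rcases hex z hp with h | h | h
        · exact absurd h h1
        · exact absurd h h2
        · exact ⟨hp, h⟩
      · rintro ⟨hp, hq⟩; exact ⟨⟨hp, h31 z hq⟩, h32 z hq⟩
  omega

lemma cnt_split4 (p q0 q1 q2 q3 : V → Prop)
    (hex : ∀ z, p z → q0 z ∨ q1 z ∨ q2 z ∨ q3 z)
    (h10 : ∀ z, q1 z → ¬ q0 z) (h20 : ∀ z, q2 z → ¬ q0 z) (h30 : ∀ z, q3 z → ¬ q0 z)
    (h21 : ∀ z, q2 z → ¬ q1 z) (h31 : ∀ z, q3 z → ¬ q1 z) (h32 : ∀ z, q3 z → ¬ q2 z) :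
    cnt p = cnt (fun z => p z ∧ q0 z) + cnt (fun z => p z ∧ q1 z) + cnt (fun z => p z ∧ q2 z)
      + cnt (fun z => p z ∧ q3 z) := by
  rw [cnt_split2 p q0]
  have := cnt_split3 (fun z => p z ∧ ¬ q0 z) q1 q2 q3
    (fun z hz => by
      rcases hex z hz.1 with h | h | h | h
      · exact absurd h hz.2
      · exact Or.inl h
      · exact Or.inr (Or.inl h)
      · exact Or.inr (Or.inr h)) h21 h31 h32
  beta_reduce at this
  have e1 : cnt (fun z => (p z ∧ ¬ q0 z) ∧ q1 z) = cnt (fun z => p z ∧ q1 z) :=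
    cnt_congr _ _ fun z => ⟨fun ⟨⟨hp, _⟩, hq⟩ => ⟨hp, hq⟩, fun ⟨hp, hq⟩ => ⟨⟨hp, h10 z hq⟩, hq⟩⟩
  have e2 : cnt (fun z => (p z ∧ ¬ q0 z) ∧ q2 z) = cnt (fun z => p z ∧ q2 z) :=
    cnt_congr _ _ fun z => ⟨fun ⟨⟨hp, _⟩, hq⟩ => ⟨hp, hq⟩, fun ⟨hp, hq⟩ => ⟨⟨hp, h20 z hq⟩, hq⟩⟩
  have e3 : cnt (fun z => (p z ∧ ¬ q0 z) ∧ q3 z) = cnt (fun z => p z ∧ q3 z) :=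
    cnt_congr _ _ fun z => ⟨fun ⟨⟨hp, _⟩, hq⟩ => ⟨hp, hq⟩, fun ⟨hp, hq⟩ => ⟨⟨hp, h30 z hq⟩, hq⟩⟩
  omega

open Classical in
lemma ncard_cnt (p : V → Prop) : {z | p z}.ncard = cnt p := by
  rw [Set.ncard_eq_toFinset_card', Set.toFinset_setOf]
  unfold cnt
  congr 1

open Classical in
lemma mul_entry (p q : V → V → Prop) [∀ a b, Decidable (p a b)] [∀ a b, Decidable (q a b)]
    (M N : Matrix V V ℤ)
    (hM : ∀ a b, M a b = if p a b then 1 else 0) (hN : ∀ a b, N a b = if q a b then 1 else 0)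
    (x y : V) : (M * N) x y = cnt fun z => p x z ∧ q z y := by
  rw [Matrix.mul_apply]
  unfold cnt
  rw [Finset.card_filter]
  push_cast
  refine Finset.sum_congr rfl fun z _ => ?_
  rw [hM, hN]
  by_cases h1 : p x z <;> by_cases h2 : q z y <;> simp [h1, h2]

open Classical in
lemma entry_eval {A : V → V → Prop} {p q : V → V → Prop}
    [∀ a b, Decidable (p a b)] [∀ a b, Decidable (q a b)] {M N : Matrix V V ℤ}
    (hM : ∀ a b, M a b = if p a b then 1 else 0) (hN : ∀ a b, N a b = if q a b then 1 else 0)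
    {tt cA cB cG cH : ℤ}
    (hq : M * N = tt • (1 : Matrix V V ℤ) + cA • matAr A + cB • (matAr A)ᵀ + cG • matE A +
      cH • (matJ V - 1 - matAr A - (matAr A)ᵀ - matE A))
    (x y : V) :
    (cnt (fun z => p x z ∧ q z y) : ℤ) =
      (if x = y then tt else 0) + (if A x y ∧ ¬ A y x then cA else 0)
      + (if A y x ∧ ¬ A x y then cB else 0) + (if A x y ∧ A y x then cG else 0)
      + cH * (1 - (if x = y then 1 else 0) - (if A x y ∧ ¬ A y x then 1 else 0)
          - (if A y x ∧ ¬ A x y then 1 else 0) - (if A x y ∧ A y x then 1 else 0)) := by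
  have h : (M * N) x y = (tt • (1 : Matrix V V ℤ) + cA • matAr A + cB • (matAr A)ᵀ + cG • matE A +
      cH • (matJ V - 1 - matAr A - (matAr A)ᵀ - matE A)) x y := by rw [hq]
  rw [mul_entry p q M N hM hN x y] at h
  rw [h]
  simp only [Matrix.add_apply, Matrix.smul_apply, Matrix.sub_apply, Matrix.one_apply,
    Matrix.transpose_apply, matAr, matE, matJ, Matrix.of_apply, smul_eq_mul]
  by_cases h1 : x = y <;> by_cases h2 : A x y ∧ ¬ A y x <;> by_cases h3 : A y x ∧ ¬ A x y <;>
    by_cases h4 : A x y ∧ A y x <;> simp [h1, h2, h3, h4] <;> ring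

open Classical in
lemma entry_sg {A : V → V → Prop} {p q : V → V → Prop}
    [∀ a b, Decidable (p a b)] [∀ a b, Decidable (q a b)] {M N : Matrix V V ℤ}
    (hM : ∀ a b, M a b = if p a b then 1 else 0) (hN : ∀ a b, N a b = if q a b then 1 else 0)
    {tt cA cB cG cH : ℤ}
    (hq : M * N = tt • (1 : Matrix V V ℤ) + cA • matAr A + cB • (matAr A)ᵀ + cG • matE A +
      cH • (matJ V - 1 - matAr A - (matAr A)ᵀ - matE A))
    {x y : V} (h1 : A x y) (h2 : ¬ A y x) :
    (cnt (fun z => p x z ∧ q z y) : ℤ) = cA := by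
  have hne : x ≠ y := fun he => h2 (he ▸ h1)
  rw [entry_eval hM hN hq x y]
  simp [hne, h1, h2]

open Classical in
lemma entry_sg' {A : V → V → Prop} {p q : V → V → Prop}
    [∀ a b, Decidable (p a b)] [∀ a b, Decidable (q a b)] {M N : Matrix V V ℤ}
    (hM : ∀ a b, M a b = if p a b then 1 else 0) (hN : ∀ a b, N a b = if q a b then 1 else 0)
    {tt cA cB cG cH : ℤ}
    (hq : M * N = tt • (1 : Matrix V V ℤ) + cA • matAr A + cB • (matAr A)ᵀ + cG • matE A +
      cH • (matJ V - 1 - matAr A - (matAr A)ᵀ - matE A))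
    {x y : V} (h1 : A y x) (h2 : ¬ A x y) :
    (cnt (fun z => p x z ∧ q z y) : ℤ) = cB := by
  have hne : x ≠ y := fun he => h2 (he ▸ h1)
  rw [entry_eval hM hN hq x y]
  simp [hne, h1, h2]

open Classical in
lemma entry_eb {A : V → V → Prop} {p q : V → V → Prop}
    [∀ a b, Decidable (p a b)] [∀ a b, Decidable (q a b)] {M N : Matrix V V ℤ}
    (hM : ∀ a b, M a b = if p a b then 1 else 0) (hN : ∀ a b, N a b = if q a b then 1 else 0)
    {tt cA cB cG cH : ℤ}
    (hq : M * N = tt • (1 : Matrix V V ℤ) + cA • matAr A + cB • (matAr A)ᵀ + cG • matE A +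
      cH • (matJ V - 1 - matAr A - (matAr A)ᵀ - matE A))
    {x y : V} (hne : x ≠ y) (h1 : A x y) (h2 : A y x) :
    (cnt (fun z => p x z ∧ q z y) : ℤ) = cG := by
  rw [entry_eval hM hN hq x y]
  simp [hne, h1, h2]

open Classical in
lemma entry_non {A : V → V → Prop} {p q : V → V → Prop}
    [∀ a b, Decidable (p a b)] [∀ a b, Decidable (q a b)] {M N : Matrix V V ℤ}
    (hM : ∀ a b, M a b = if p a b then 1 else 0) (hN : ∀ a b, N a b = if q a b then 1 else 0)
    {tt cA cB cG cH : ℤ}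
    (hq : M * N = tt • (1 : Matrix V V ℤ) + cA • matAr A + cB • (matAr A)ᵀ + cG • matE A +
      cH • (matJ V - 1 - matAr A - (matAr A)ᵀ - matE A))
    {x y : V} (hne : x ≠ y) (h1 : ¬ A x y) (h2 : ¬ A y x) :
    (cnt (fun z => p x z ∧ q z y) : ℤ) = cH := by
  rw [entry_eval hM hN hq x y]
  simp [hne, h1, h2]

end Aux

/-- in a doubly regular `(m,r)`-team semicomplete multipartite digraph, for each
pair `i ≠ j` one of three structural alternatives holds. -/
theorem statement_6 {V : Type*} [Fintype V] (A : V → V → Prop) {m : ℕ} (f : V → Fin m)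
    (r : ℕ) (h : IsDoublyRegularTeamSMD A f r) (i j : Fin m) (hij : i ≠ j) :
    (∃ c : ℕ, ∀ x, f x = i → (Aplus A f j x).ncard = c) ∨
    TypeIIIsplitB A f i j ∨
    (∃ S T' : Set V,
      S ⊆ {x | f x = i} ∧ S.Nonempty ∧ ({x | f x = i} \ S).Nonempty ∧
      T' ⊆ {y | f y = j} ∧ T'.Nonempty ∧ ({y | f y = j} \ T').Nonempty ∧
      (∀ x ∈ S, ∀ y ∈ T', A x y ∧ A y x) ∧
      (∀ x ∈ {x | f x = i} \ S, ∀ y ∈ {y | f y = j} \ T', A x y ∧ A y x) ∧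
      (∀ x ∈ S, ∀ y ∈ {y | f y = j} \ T', A x y ∧ ¬ A y x) ∧
      (∀ y ∈ T', ∀ x ∈ {x | f x = i} \ S, A y x ∧ ¬ A x y) ∧
      2 * ({y | f y = j} \ T').ncard = r) := by
  classical
  obtain ⟨⟨hm2, hr2, hirr, hsize, hadj⟩, -, t, α, β, γ, η, hDR⟩ := h
  have hME : ∀ a b : V, matE A a b = if A a b ∧ A b a then (1:ℤ) else 0 := fun a b => rfl
  have hMA : ∀ a b : V, matAr A a b = if A a b ∧ ¬ A b a then (1:ℤ) else 0 := fun a b => rfl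
  have h00 : matE A * matE A = t • (1 : Matrix V V ℤ) + α 0 • matAr A + β 0 • (matAr A)ᵀ +
      γ 0 • matE A + η 0 • (matJ V - 1 - matAr A - (matAr A)ᵀ - matE A) := by
    simpa using hDR 0 0
  have h01 : matE A * matAr A = (0:ℤ) • (1 : Matrix V V ℤ) + α 1 • matAr A + β 1 • (matAr A)ᵀ +
      γ 1 • matE A + η 1 • (matJ V - 1 - matAr A - (matAr A)ᵀ - matE A) := by
    simpa using hDR 0 1
  have h10 : matAr A * matE A = (0:ℤ) • (1 : Matrix V V ℤ) + α 1 • matAr A + β 1 • (matAr A)ᵀ +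
      γ 1 • matE A + η 1 • (matJ V - 1 - matAr A - (matAr A)ᵀ - matE A) := by
    simpa using hDR 1 0
  have h11 : matAr A * matAr A = (0:ℤ) • (1 : Matrix V V ℤ) + α 2 • matAr A + β 2 • (matAr A)ᵀ +
      γ 2 • matE A + η 2 • (matJ V - 1 - matAr A - (matAr A)ᵀ - matE A) := by
    simpa using hDR 1 1
  have hfne : ∀ {x y : V}, A x y → f x ≠ f y := by
    intro x y hxy hf
    have hne : x ≠ y := fun he => hirr x (he ▸ hxy)
    exact (hadj x y hne).mp (Or.inl hxy) hf
  have htri : ∀ {x y : V}, f x ≠ f y →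
      (A x y ∧ ¬ A y x) ∨ (A y x ∧ ¬ A x y) ∨ (A x y ∧ A y x) := by
    intro x y hf
    have hne : x ≠ y := fun he => hf (he ▸ rfl)
    rcases (hadj x y hne).mpr hf with h | h
    · by_cases h' : A y x
      · exact Or.inr (Or.inr ⟨h, h'⟩)
      · exact Or.inl ⟨h, h'⟩
    · by_cases h' : A x y
      · exact Or.inr (Or.inr ⟨h', h⟩)
      · exact Or.inr (Or.inl ⟨h, h'⟩)
  obtain ⟨a, ha⟩ : ∃ a : V → ℕ, ∀ x, a x = cnt (fun z => f z = j ∧ A x z ∧ ¬ A z x) :=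
    ⟨_, fun _ => rfl⟩
  obtain ⟨a', ha'⟩ : ∃ a' : V → ℕ, ∀ y, a' y = cnt (fun z => f z = i ∧ A y z ∧ ¬ A z y) :=
    ⟨_, fun _ => rfl⟩
  obtain ⟨e, he⟩ : ∃ e : V → ℕ, ∀ x, e x = cnt (fun z => f z = j ∧ A x z ∧ A z x) :=
    ⟨_, fun _ => rfl⟩
  obtain ⟨e', he'⟩ : ∃ e' : V → ℕ, ∀ y, e' y = cnt (fun z => f z = i ∧ A y z ∧ A z y) :=
    ⟨_, fun _ => rfl⟩
  obtain ⟨At, hAt⟩ : ∃ At : V → ℕ, ∀ x, At x = cnt (fun z => A x z ∧ ¬ A z x) :=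
    ⟨_, fun _ => rfl⟩
  obtain ⟨Et, hEt⟩ : ∃ Et : V → ℕ, ∀ x, Et x = cnt (fun z => A x z ∧ A z x) :=
    ⟨_, fun _ => rfl⟩
  obtain ⟨δ, hδdef⟩ : ∃ δ : ℤ, δ = β 1 + β 2 - α 1 - α 2 := ⟨_, rfl⟩
  have hsizecnt : ∀ l : Fin m, cnt (fun z : V => f z = l) = r := fun l => by
    rw [← ncard_cnt]; exact hsize l
  -- Et is globally constant
  have hEtc : ∀ x : V, (Et x : ℤ) = η 0 + 2 * η 1 := by
    intro x
    obtain ⟨x', hx'p, hx'ne⟩ := exists_other (fun z : V => f z = f x)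
      (by rw [hsizecnt]; exact hr2) x
    have hnadj1 : ¬ A x x' := fun hA => hfne hA hx'p.symm
    have hnadj2 : ¬ A x' x := fun hA => hfne hA hx'p
    have hsp := cnt_split3 (fun z => A x z ∧ A z x)
        (fun z => A z x' ∧ ¬ A x' z) (fun z => A x' z ∧ ¬ A z x') (fun z => A z x' ∧ A x' z)
        (fun z hz => htri (fun hzf => hfne hz.2 (hzf.trans hx'p)))
        (fun z h2 h1 => h2.2 h1.1) (fun z h3 h1 => h1.2 h3.2) (fun z h3 h2 => h2.2 h3.1)
    have c2 : (cnt (fun z => (A x z ∧ A z x) ∧ (A x' z ∧ ¬ A z x')) : ℤ) =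
        (cnt (fun z => (A x' z ∧ ¬ A z x') ∧ (A z x ∧ A x z)) : ℤ) := by
      exact_mod_cast cnt_congr _ _ (fun z => by tauto)
    have t1 : (cnt (fun z => (A x z ∧ A z x) ∧ (A z x' ∧ ¬ A x' z)) : ℤ) = η 1 :=
      entry_non hME hMA h01 hx'ne.symm hnadj1 hnadj2
    have t2 : (cnt (fun z => (A x' z ∧ ¬ A z x') ∧ (A z x ∧ A x z)) : ℤ) = η 1 :=
      entry_non hMA hME h10 hx'ne hnadj2 hnadj1
    have t3 : (cnt (fun z => (A x z ∧ A z x) ∧ (A z x' ∧ A x' z)) : ℤ) = η 0 :=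
      entry_non hME hME h00 hx'ne.symm hnadj1 hnadj2
    have hcast : (Et x : ℤ) = (cnt (fun z => (A x z ∧ A z x) ∧ (A z x' ∧ ¬ A x' z)) : ℤ) +
        (cnt (fun z => (A x z ∧ A z x) ∧ (A x' z ∧ ¬ A z x')) : ℤ) +
        (cnt (fun z => (A x z ∧ A z x) ∧ (A z x' ∧ A x' z)) : ℤ) := by
      rw [hEt x, hsp]; push_cast; ring
    rw [hcast, t1, t3, c2, t2]; ring
  -- At is constant on each part
  have hAtc : ∀ x x' : V, f x = f x' → At x = At x' := by
    have key : ∀ x x' : V, f x = f x' → x ≠ x' →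
        (At x : ℤ) = η 2 + η 1 + (cnt (fun z => (A x z ∧ ¬ A z x) ∧ (A x' z ∧ ¬ A z x')) : ℤ) := by
      intro x x' hp hne
      have hnadj1 : ¬ A x x' := fun hA => hfne hA hp
      have hnadj2 : ¬ A x' x := fun hA => hfne hA hp.symm
      have hsp := cnt_split3 (fun z => A x z ∧ ¬ A z x)
          (fun z => A z x' ∧ ¬ A x' z) (fun z => A x' z ∧ ¬ A z x') (fun z => A z x' ∧ A x' z)
          (fun z hz => htri (fun hzf => hfne hz.1 (hp.trans hzf.symm)))
          (fun z h2 h1 => h2.2 h1.1) (fun z h3 h1 => h1.2 h3.2) (fun z h3 h2 => h2.2 h3.1)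
      have t1 : (cnt (fun z => (A x z ∧ ¬ A z x) ∧ (A z x' ∧ ¬ A x' z)) : ℤ) = η 2 :=
        entry_non hMA hMA h11 hne hnadj1 hnadj2
      have t3 : (cnt (fun z => (A x z ∧ ¬ A z x) ∧ (A z x' ∧ A x' z)) : ℤ) = η 1 :=
        entry_non hMA hME h10 hne hnadj1 hnadj2
      have hcast : (At x : ℤ) = (cnt (fun z => (A x z ∧ ¬ A z x) ∧ (A z x' ∧ ¬ A x' z)) : ℤ) +
          (cnt (fun z => (A x z ∧ ¬ A z x) ∧ (A x' z ∧ ¬ A z x')) : ℤ) +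
          (cnt (fun z => (A x z ∧ ¬ A z x) ∧ (A z x' ∧ A x' z)) : ℤ) := by
        rw [hAt x, hsp]; push_cast; ring
      rw [hcast, t1, t3]; ring
    intro x x' hp
    by_cases hne : x = x'
    · rw [hne]
    have e1 := key x x' hp hne
    have e2 := key x' x hp.symm (Ne.symm hne)
    have c : (cnt (fun z => (A x z ∧ ¬ A z x) ∧ (A x' z ∧ ¬ A z x')) : ℤ) =
        (cnt (fun z => (A x' z ∧ ¬ A z x') ∧ (A x z ∧ ¬ A z x)) : ℤ) := by
      exact_mod_cast cnt_congr _ _ (fun z => by tauto)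
    have : (At x : ℤ) = (At x' : ℤ) := by rw [e1, e2, c]
    exact_mod_cast this
  -- key degree relation between the two parts
  have hF3 : ∀ x y : V, f x = i → f y = j →
      ((A x y ∧ ¬ A y x) → (a x : ℤ) = (a' y : ℤ) + (At x : ℤ) - (At y : ℤ) + δ) ∧
      ((A y x ∧ ¬ A x y) → (a x : ℤ) = (a' y : ℤ) + (At x : ℤ) - (At y : ℤ) - δ) ∧
      ((A x y ∧ A y x) → (a x : ℤ) = (a' y : ℤ) + (At x : ℤ) - (At y : ℤ)) := by
    intro x y hx hy
    have hfxy : f x ≠ f y := by rw [hx, hy]; exact fun hh => hij hh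
    have hne : x ≠ y := fun heq => hfxy (heq ▸ rfl)
    have hspx := cnt_split4 (fun z => A x z ∧ ¬ A z x) (fun z => f z = j)
        (fun z => A z y ∧ ¬ A y z) (fun z => A y z ∧ ¬ A z y) (fun z => A z y ∧ A y z)
        (fun z _ => by
          by_cases hzj : f z = j
          · exact Or.inl hzj
          · exact Or.inr (htri (fun hzf => hzj (hzf ▸ hy ▸ rfl)))
        )
        (fun z h1 h0 => hfne h1.1 (h0.trans hy.symm))
        (fun z h2 h0 => hfne h2.1 (hy.trans h0.symm))
        (fun z h3 h0 => hfne h3.1 (h0.trans hy.symm))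
        (fun z h2 h1 => h2.2 h1.1) (fun z h3 h1 => h1.2 h3.2) (fun z h3 h2 => h2.2 h3.1)
    have hspy := cnt_split4 (fun z => A y z ∧ ¬ A z y) (fun z => f z = i)
        (fun z => A z x ∧ ¬ A x z) (fun z => A x z ∧ ¬ A z x) (fun z => A z x ∧ A x z)
        (fun z _ => by
          by_cases hzi : f z = i
          · exact Or.inl hzi
          · exact Or.inr (htri (fun hzf => hzi (hzf ▸ hx ▸ rfl)))
        )
        (fun z h1 h0 => hfne h1.1 (h0.trans hx.symm))
        (fun z h2 h0 => hfne h2.1 (hx.trans h0.symm))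
        (fun z h3 h0 => hfne h3.1 (h0.trans hx.symm))
        (fun z h2 h1 => h2.2 h1.1) (fun z h3 h1 => h1.2 h3.2) (fun z h3 h2 => h2.2 h3.1)
    have cax : cnt (fun z => (A x z ∧ ¬ A z x) ∧ f z = j) = a x := by
      rw [ha x]; exact cnt_congr _ _ (fun z => by tauto)
    have cay : cnt (fun z => (A y z ∧ ¬ A z y) ∧ f z = i) = a' y := by
      rw [ha' y]; exact cnt_congr _ _ (fun z => by tauto)
    have cpq : (cnt (fun z => (A x z ∧ ¬ A z x) ∧ (A y z ∧ ¬ A z y)) : ℤ) =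
        (cnt (fun z => (A y z ∧ ¬ A z y) ∧ (A x z ∧ ¬ A z x)) : ℤ) := by
      exact_mod_cast cnt_congr _ _ (fun z => by tauto)
    have HX : (At x : ℤ) = (a x : ℤ) +
        (cnt (fun z => (A x z ∧ ¬ A z x) ∧ (A z y ∧ ¬ A y z)) : ℤ) +
        (cnt (fun z => (A x z ∧ ¬ A z x) ∧ (A y z ∧ ¬ A z y)) : ℤ) +
        (cnt (fun z => (A x z ∧ ¬ A z x) ∧ (A z y ∧ A y z)) : ℤ) := by
      rw [hAt x, hspx, cax]; push_cast; ring
    have HY : (At y : ℤ) = (a' y : ℤ) +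
        (cnt (fun z => (A y z ∧ ¬ A z y) ∧ (A z x ∧ ¬ A x z)) : ℤ) +
        (cnt (fun z => (A y z ∧ ¬ A z y) ∧ (A x z ∧ ¬ A z x)) : ℤ) +
        (cnt (fun z => (A y z ∧ ¬ A z y) ∧ (A z x ∧ A x z)) : ℤ) := by
      rw [hAt y, hspy, cay]; push_cast; ring
    refine ⟨fun hrel => ?_, fun hrel => ?_, fun hrel => ?_⟩
    · have e1 : (cnt (fun z => (A x z ∧ ¬ A z x) ∧ (A z y ∧ ¬ A y z)) : ℤ) = α 2 :=
        entry_sg hMA hMA h11 hrel.1 hrel.2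
      have e2 : (cnt (fun z => (A x z ∧ ¬ A z x) ∧ (A z y ∧ A y z)) : ℤ) = α 1 :=
        entry_sg hMA hME h10 hrel.1 hrel.2
      have e3 : (cnt (fun z => (A y z ∧ ¬ A z y) ∧ (A z x ∧ ¬ A x z)) : ℤ) = β 2 :=
        entry_sg' hMA hMA h11 hrel.1 hrel.2
      have e4 : (cnt (fun z => (A y z ∧ ¬ A z y) ∧ (A z x ∧ A x z)) : ℤ) = β 1 :=
        entry_sg' hMA hME h10 hrel.1 hrel.2
      rw [hδdef]; linarith
    · have e1 : (cnt (fun z => (A x z ∧ ¬ A z x) ∧ (A z y ∧ ¬ A y z)) : ℤ) = β 2 :=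
        entry_sg' hMA hMA h11 hrel.1 hrel.2
      have e2 : (cnt (fun z => (A x z ∧ ¬ A z x) ∧ (A z y ∧ A y z)) : ℤ) = β 1 :=
        entry_sg' hMA hME h10 hrel.1 hrel.2
      have e3 : (cnt (fun z => (A y z ∧ ¬ A z y) ∧ (A z x ∧ ¬ A x z)) : ℤ) = α 2 :=
        entry_sg hMA hMA h11 hrel.1 hrel.2
      have e4 : (cnt (fun z => (A y z ∧ ¬ A z y) ∧ (A z x ∧ A x z)) : ℤ) = α 1 :=
        entry_sg hMA hME h10 hrel.1 hrel.2
      rw [hδdef]; linarith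
    · have e1 : (cnt (fun z => (A x z ∧ ¬ A z x) ∧ (A z y ∧ ¬ A y z)) : ℤ) = γ 2 :=
        entry_eb hMA hMA h11 hne hrel.1 hrel.2
      have e2 : (cnt (fun z => (A x z ∧ ¬ A z x) ∧ (A z y ∧ A y z)) : ℤ) = γ 1 :=
        entry_eb hMA hME h10 hne hrel.1 hrel.2
      have e3 : (cnt (fun z => (A y z ∧ ¬ A z y) ∧ (A z x ∧ ¬ A x z)) : ℤ) = γ 2 :=
        entry_eb hMA hMA h11 (Ne.symm hne) hrel.2 hrel.1
      have e4 : (cnt (fun z => (A y z ∧ ¬ A z y) ∧ (A z x ∧ A x z)) : ℤ) = γ 1 :=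
        entry_eb hMA hME h10 (Ne.symm hne) hrel.2 hrel.1
      linarith
  -- edge-degree relation
  have hF4 : ∀ x y : V, f x = i → f y = j →
      ((A x y ∧ ¬ A y x) → (e x : ℤ) + α 0 = (e' y : ℤ) + β 0) ∧
      ((A y x ∧ ¬ A x y) → (e x : ℤ) + β 0 = (e' y : ℤ) + α 0) ∧
      ((A x y ∧ A y x) → (e x : ℤ) = (e' y : ℤ)) := by
    intro x y hx hy
    have hfxy : f x ≠ f y := by rw [hx, hy]; exact fun hh => hij hh
    have hne : x ≠ y := fun heq => hfxy (heq ▸ rfl)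
    have hspx := cnt_split4 (fun z => A x z ∧ A z x) (fun z => f z = j)
        (fun z => A z y ∧ ¬ A y z) (fun z => A y z ∧ ¬ A z y) (fun z => A z y ∧ A y z)
        (fun z _ => by
          by_cases hzj : f z = j
          · exact Or.inl hzj
          · exact Or.inr (htri (fun hzf => hzj (hzf ▸ hy ▸ rfl)))
        )
        (fun z h1 h0 => hfne h1.1 (h0.trans hy.symm))
        (fun z h2 h0 => hfne h2.1 (hy.trans h0.symm))
        (fun z h3 h0 => hfne h3.1 (h0.trans hy.symm))
        (fun z h2 h1 => h2.2 h1.1) (fun z h3 h1 => h1.2 h3.2) (fun z h3 h2 => h2.2 h3.1)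
    have hspy := cnt_split4 (fun z => A y z ∧ A z y) (fun z => f z = i)
        (fun z => A z x ∧ ¬ A x z) (fun z => A x z ∧ ¬ A z x) (fun z => A z x ∧ A x z)
        (fun z _ => by
          by_cases hzi : f z = i
          · exact Or.inl hzi
          · exact Or.inr (htri (fun hzf => hzi (hzf ▸ hx ▸ rfl)))
        )
        (fun z h1 h0 => hfne h1.1 (h0.trans hx.symm))
        (fun z h2 h0 => hfne h2.1 (hx.trans h0.symm))
        (fun z h3 h0 => hfne h3.1 (h0.trans hx.symm))
        (fun z h2 h1 => h2.2 h1.1) (fun z h3 h1 => h1.2 h3.2) (fun z h3 h2 => h2.2 h3.1)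
    have cex : cnt (fun z => (A x z ∧ A z x) ∧ f z = j) = e x := by
      rw [he x]; exact cnt_congr _ _ (fun z => by tauto)
    have cey : cnt (fun z => (A y z ∧ A z y) ∧ f z = i) = e' y := by
      rw [he' y]; exact cnt_congr _ _ (fun z => by tauto)
    have c2 : (cnt (fun z => (A x z ∧ A z x) ∧ (A y z ∧ ¬ A z y)) : ℤ) =
        (cnt (fun z => (A y z ∧ ¬ A z y) ∧ (A z x ∧ A x z)) : ℤ) := by
      exact_mod_cast cnt_congr _ _ (fun z => by tauto)
    have c2' : (cnt (fun z => (A y z ∧ A z y) ∧ (A x z ∧ ¬ A z x)) : ℤ) =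
        (cnt (fun z => (A x z ∧ ¬ A z x) ∧ (A z y ∧ A y z)) : ℤ) := by
      exact_mod_cast cnt_congr _ _ (fun z => by tauto)
    have HX : (Et x : ℤ) = (e x : ℤ) +
        (cnt (fun z => (A x z ∧ A z x) ∧ (A z y ∧ ¬ A y z)) : ℤ) +
        (cnt (fun z => (A x z ∧ A z x) ∧ (A y z ∧ ¬ A z y)) : ℤ) +
        (cnt (fun z => (A x z ∧ A z x) ∧ (A z y ∧ A y z)) : ℤ) := by
      rw [hEt x, hspx, cex]; push_cast; ring
    have HY : (Et y : ℤ) = (e' y : ℤ) +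
        (cnt (fun z => (A y z ∧ A z y) ∧ (A z x ∧ ¬ A x z)) : ℤ) +
        (cnt (fun z => (A y z ∧ A z y) ∧ (A x z ∧ ¬ A z x)) : ℤ) +
        (cnt (fun z => (A y z ∧ A z y) ∧ (A z x ∧ A x z)) : ℤ) := by
      rw [hEt y, hspy, cey]; push_cast; ring
    have hEE : (Et x : ℤ) = (Et y : ℤ) := by rw [hEtc x, hEtc y]
    refine ⟨fun hrel => ?_, fun hrel => ?_, fun hrel => ?_⟩
    · have eA : (cnt (fun z => (A x z ∧ A z x) ∧ (A z y ∧ ¬ A y z)) : ℤ) = α 1 :=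
        entry_sg hME hMA h01 hrel.1 hrel.2
      have eB : (cnt (fun z => (A y z ∧ ¬ A z y) ∧ (A z x ∧ A x z)) : ℤ) = β 1 :=
        entry_sg' hMA hME h10 hrel.1 hrel.2
      have eC : (cnt (fun z => (A x z ∧ A z x) ∧ (A z y ∧ A y z)) : ℤ) = α 0 :=
        entry_sg hME hME h00 hrel.1 hrel.2
      have eD : (cnt (fun z => (A y z ∧ A z y) ∧ (A z x ∧ ¬ A x z)) : ℤ) = β 1 :=
        entry_sg' hME hMA h01 hrel.1 hrel.2
      have eE : (cnt (fun z => (A x z ∧ ¬ A z x) ∧ (A z y ∧ A y z)) : ℤ) = α 1 :=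
        entry_sg hMA hME h10 hrel.1 hrel.2
      have eF : (cnt (fun z => (A y z ∧ A z y) ∧ (A z x ∧ A x z)) : ℤ) = β 0 :=
        entry_sg' hME hME h00 hrel.1 hrel.2
      linarith
    · have eA : (cnt (fun z => (A x z ∧ A z x) ∧ (A z y ∧ ¬ A y z)) : ℤ) = β 1 :=
        entry_sg' hME hMA h01 hrel.1 hrel.2
      have eB : (cnt (fun z => (A y z ∧ ¬ A z y) ∧ (A z x ∧ A x z)) : ℤ) = α 1 :=
        entry_sg hMA hME h10 hrel.1 hrel.2
      have eC : (cnt (fun z => (A x z ∧ A z x) ∧ (A z y ∧ A y z)) : ℤ) = β 0 :=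
        entry_sg' hME hME h00 hrel.1 hrel.2
      have eD : (cnt (fun z => (A y z ∧ A z y) ∧ (A z x ∧ ¬ A x z)) : ℤ) = α 1 :=
        entry_sg hME hMA h01 hrel.1 hrel.2
      have eE : (cnt (fun z => (A x z ∧ ¬ A z x) ∧ (A z y ∧ A y z)) : ℤ) = β 1 :=
        entry_sg' hMA hME h10 hrel.1 hrel.2
      have eF : (cnt (fun z => (A y z ∧ A z y) ∧ (A z x ∧ A x z)) : ℤ) = α 0 :=
        entry_sg hME hME h00 hrel.1 hrel.2
      linarith
    · have eA : (cnt (fun z => (A x z ∧ A z x) ∧ (A z y ∧ ¬ A y z)) : ℤ) = γ 1 :=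
        entry_eb hME hMA h01 hne hrel.1 hrel.2
      have eB : (cnt (fun z => (A y z ∧ ¬ A z y) ∧ (A z x ∧ A x z)) : ℤ) = γ 1 :=
        entry_eb hMA hME h10 (Ne.symm hne) hrel.2 hrel.1
      have eC : (cnt (fun z => (A x z ∧ A z x) ∧ (A z y ∧ A y z)) : ℤ) = γ 0 :=
        entry_eb hME hME h00 hne hrel.1 hrel.2
      have eD : (cnt (fun z => (A y z ∧ A z y) ∧ (A z x ∧ ¬ A x z)) : ℤ) = γ 1 :=
        entry_eb hME hMA h01 (Ne.symm hne) hrel.2 hrel.1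
      have eE : (cnt (fun z => (A x z ∧ ¬ A z x) ∧ (A z y ∧ A y z)) : ℤ) = γ 1 :=
        entry_eb hMA hME h10 hne hrel.1 hrel.2
      have eF : (cnt (fun z => (A y z ∧ A z y) ∧ (A z x ∧ A x z)) : ℤ) = γ 0 :=
        entry_eb hME hME h00 (Ne.symm hne) hrel.2 hrel.1
      linarith
  -- main case split
  by_cases hcase : ∀ x x' : V, f x = i → f x' = i → a x = a x'
  · left
    obtain ⟨x₀, hx₀⟩ := cnt_pos_exists (fun z : V => f z = i) (by rw [hsizecnt]; omega)
    refine ⟨a x₀, fun x hx => ?_⟩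
    have hnc : (Aplus A f j x).ncard = a x := by
      rw [show Aplus A f j x = {y | f y = j ∧ A x y ∧ ¬ A y x} from rfl, ncard_cnt, ha x]
    rw [hnc, hcase x x₀ hx hx₀]
  push_neg at hcase
  obtain ⟨x₁, x₂, hx₁, hx₂, hne12⟩ := hcase
  -- there exists a single arc
  have hsg : ∃ u v : V, A u v ∧ ¬ A v u := by
    rcases (show 0 < a x₁ ∨ 0 < a x₂ by omega) with hp | hp
    · obtain ⟨v, hv⟩ := cnt_pos_exists (fun z => f z = j ∧ A x₁ z ∧ ¬ A z x₁)
        (by rw [← ha x₁]; exact hp)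
      exact ⟨x₁, v, hv.2.1, hv.2.2⟩
    · obtain ⟨v, hv⟩ := cnt_pos_exists (fun z => f z = j ∧ A x₂ z ∧ ¬ A z x₂)
        (by rw [← ha x₂]; exact hp)
      exact ⟨x₂, v, hv.2.1, hv.2.2⟩
  have hαβ : α 0 = β 0 := by
    obtain ⟨u, v, huv, hvu⟩ := hsg
    have c : (cnt (fun z => (A u z ∧ A z u) ∧ (A z v ∧ A v z)) : ℤ) =
        (cnt (fun z => (A v z ∧ A z v) ∧ (A z u ∧ A u z)) : ℤ) := by
      exact_mod_cast cnt_congr _ _ (fun z => by tauto)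
    have e1 : (cnt (fun z => (A u z ∧ A z u) ∧ (A z v ∧ A v z)) : ℤ) = α 0 :=
      entry_sg hME hME h00 huv hvu
    have e2 : (cnt (fun z => (A v z ∧ A z v) ∧ (A z u ∧ A u z)) : ℤ) = β 0 :=
      entry_sg' hME hME h00 huv hvu
    rw [← e1, c, e2]
  have hee : ∀ x y : V, f x = i → f y = j → (e x : ℤ) = (e' y : ℤ) := by
    intro x y hx hy
    have hfxy : f x ≠ f y := by rw [hx, hy]; exact fun hh => hij hh
    rcases htri hfxy with hrel | hrel | hrel
    · have := (hF4 x y hx hy).1 hrel; linarith [hαβ.le, hαβ.ge]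
    · have := (hF4 x y hx hy).2.1 hrel; linarith [hαβ.le, hαβ.ge]
    · exact (hF4 x y hx hy).2.2 hrel
  obtain ⟨w, hw⟩ : ∃ w : V → ℤ, ∀ y, w y = (a' y : ℤ) + (At x₁ : ℤ) - (At y : ℤ) :=
    ⟨_, fun _ => rfl⟩
  have hxy3 : ∀ x y : V, f x = i → f y = j →
      ((A x y ∧ ¬ A y x) ∧ (a x : ℤ) = w y + δ) ∨
      ((A y x ∧ ¬ A x y) ∧ (a x : ℤ) = w y - δ) ∨
      ((A x y ∧ A y x) ∧ (a x : ℤ) = w y) := by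
    intro x y hx hy
    have hAteq : (At x : ℤ) = (At x₁ : ℤ) := by
      exact_mod_cast hAtc x x₁ (hx.trans hx₁.symm)
    have hfxy : f x ≠ f y := by rw [hx, hy]; exact fun hh => hij hh
    rcases htri hfxy with hrel | hrel | hrel
    · exact Or.inl ⟨hrel, by have := (hF3 x y hx hy).1 hrel; rw [hw y]; linarith⟩
    · exact Or.inr (Or.inl ⟨hrel, by have := (hF3 x y hx hy).2.1 hrel; rw [hw y]; linarith⟩)
    · exact Or.inr (Or.inr ⟨hrel, by have := (hF3 x y hx hy).2.2 hrel; rw [hw y]; linarith⟩)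
  obtain ⟨y₀, hy₀⟩ := cnt_pos_exists (fun z : V => f z = j) (by rw [hsizecnt]; omega)
  have hδ : δ ≠ 0 := by
    intro h0
    rcases hxy3 x₁ y₀ hx₁ hy₀ with ⟨-, h1⟩ | ⟨-, h1⟩ | ⟨-, h1⟩ <;>
      rcases hxy3 x₂ y₀ hx₂ hy₀ with ⟨-, h2⟩ | ⟨-, h2⟩ | ⟨-, h2⟩ <;> omega
  have hconv : ∀ x y : V, f x = i → f y = j →
      ((a x : ℤ) = w y + δ → A x y ∧ ¬ A y x) ∧
      ((a x : ℤ) = w y - δ → A y x ∧ ¬ A x y) ∧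
      ((a x : ℤ) = w y → A x y ∧ A y x) := by
    intro x y hx hy
    rcases hxy3 x y hx hy with ⟨hr, hv⟩ | ⟨hr, hv⟩ | ⟨hr, hv⟩ <;>
      exact ⟨fun hh => by first | exact hr | (exfalso; omega),
             fun hh => by first | exact hr | (exfalso; omega),
             fun hh => by first | exact hr | (exfalso; omega)⟩
  -- Case 1 : a splits into top/bottom classes at distance 2δ
  have case1 : ∀ p q y₁ : V, f p = i → f q = i → f y₁ = j →
      (a p : ℤ) = w y₁ + δ → (a q : ℤ) = w y₁ - δ → TypeIIIsplitB A f i j := by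
    intro p q y₁ hp hq hy₁ hap haq
    have hwc : ∀ y : V, f y = j → w y = w y₁ := by
      intro y hy
      rcases hxy3 p y hp hy with ⟨-, h1⟩ | ⟨-, h1⟩ | ⟨-, h1⟩ <;>
        rcases hxy3 q y hq hy with ⟨-, h2⟩ | ⟨-, h2⟩ | ⟨-, h2⟩ <;> omega
    have hno : ∀ x : V, f x = i → (a x : ℤ) = w y₁ + δ ∨ (a x : ℤ) = w y₁ - δ := by
      intro x hx
      rcases hxy3 x y₁ hx hy₁ with ⟨-, h1⟩ | ⟨-, h1⟩ | ⟨-, h1⟩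
      · exact Or.inl h1
      · exact Or.inr h1
      · exfalso
        have hex : e x = r := by
          have hA : ∀ z, f z = j → A x z ∧ A z x := fun z hz =>
            (hconv x z hx hz).2.2 (by rw [hwc z hz]; omega)
          rw [he x, cnt_congr _ (fun z : V => f z = j)
            (fun z => ⟨fun hz => hz.1, fun hz => ⟨hz, hA z hz⟩⟩), hsizecnt]
        have hep : e p = 0 := by
          have hA : ∀ z, f z = j → A p z ∧ ¬ A z p := fun z hz =>
            (hconv p z hp hz).1 (by rw [hwc z hz]; omega)
          rw [he p]
          exact cnt_eq_zero _ (fun z hz => (hA z hz.1).2 hz.2.2)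
        have g1 := hee x y₁ hx hy₁
        have g2 := hee p y₁ hp hy₁
        omega
    refine ⟨{x | f x = i ∧ (a x : ℤ) = w y₁ + δ}, fun x hx => hx.1, ⟨p, hp, hap⟩,
      ⟨q, hq, fun hmem => hδ (by have := hmem.2; omega)⟩, ?_, ?_⟩
    · intro x hx y hy
      exact (hconv x y hx.1 hy).1 (by rw [hwc y hy]; exact hx.2)
    · intro y hy x hx
      have hax : (a x : ℤ) = w y₁ - δ := by
        rcases hno x hx.1 with hh | hh
        · exact absurd ⟨hx.1, hh⟩ hx.2
        · exact hh
      exact (hconv x y hx.1 hy).2.1 (by rw [hwc y hy]; omega)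
  -- Case 2 : a splits at distance δ, giving the four-block structure
  have case2 : ∀ p q : V, f p = i → f q = i → (a p : ℤ) = (a q : ℤ) + δ →
      (∃ S T' : Set V,
        S ⊆ {x | f x = i} ∧ S.Nonempty ∧ ({x | f x = i} \ S).Nonempty ∧
        T' ⊆ {y | f y = j} ∧ T'.Nonempty ∧ ({y | f y = j} \ T').Nonempty ∧
        (∀ x ∈ S, ∀ y ∈ T', A x y ∧ A y x) ∧
        (∀ x ∈ {x | f x = i} \ S, ∀ y ∈ {y | f y = j} \ T', A x y ∧ A y x) ∧
        (∀ x ∈ S, ∀ y ∈ {y | f y = j} \ T', A x y ∧ ¬ A y x) ∧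
        (∀ y ∈ T', ∀ x ∈ {x | f x = i} \ S, A y x ∧ ¬ A x y) ∧
        2 * ({y | f y = j} \ T').ncard = r) := by
    intro p q hp hq hpq
    have hwd : ∀ y : V, f y = j → w y = (a q : ℤ) ∨ w y = (a p : ℤ) := by
      intro y hy
      rcases hxy3 p y hp hy with ⟨-, h1⟩ | ⟨-, h1⟩ | ⟨-, h1⟩ <;>
        rcases hxy3 q y hq hy with ⟨-, h2⟩ | ⟨-, h2⟩ | ⟨-, h2⟩ <;> omega
    have hy1 : ∃ y, f y = j ∧ w y = (a q : ℤ) := by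
      by_contra hcon
      push_neg at hcon
      have hall : ∀ y, f y = j → w y = (a p : ℤ) := fun y hy =>
        (hwd y hy).resolve_left (hcon y hy)
      have hep : e p = r := by
        have hA : ∀ z, f z = j → A p z ∧ A z p := fun z hz =>
          (hconv p z hp hz).2.2 (by rw [hall z hz])
        rw [he p, cnt_congr _ (fun z : V => f z = j)
          (fun z => ⟨fun hz => hz.1, fun hz => ⟨hz, hA z hz⟩⟩), hsizecnt]
      have heq0 : e q = 0 := by
        have hA : ∀ z, f z = j → A z q ∧ ¬ A q z := fun z hz =>
          (hconv q z hq hz).2.1 (by rw [hall z hz]; omega)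
        rw [he q]
        exact cnt_eq_zero _ (fun z hz => (hA z hz.1).2 hz.2.1)
      have g1 := hee p y₀ hp hy₀
      have g2 := hee q y₀ hq hy₀
      omega
    have hy2 : ∃ y, f y = j ∧ w y = (a p : ℤ) := by
      by_contra hcon
      push_neg at hcon
      have hall : ∀ y, f y = j → w y = (a q : ℤ) := fun y hy =>
        (hwd y hy).resolve_right (hcon y hy)
      have hep : e p = 0 := by
        have hA : ∀ z, f z = j → A p z ∧ ¬ A z p := fun z hz =>
          (hconv p z hp hz).1 (by rw [hall z hz]; omega)
        rw [he p]
        exact cnt_eq_zero _ (fun z hz => (hA z hz.1).2 hz.2.2)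
      have heqr : e q = r := by
        have hA : ∀ z, f z = j → A q z ∧ A z q := fun z hz =>
          (hconv q z hq hz).2.2 (by rw [hall z hz])
        rw [he q, cnt_congr _ (fun z : V => f z = j)
          (fun z => ⟨fun hz => hz.1, fun hz => ⟨hz, hA z hz⟩⟩), hsizecnt]
      have g1 := hee p y₀ hp hy₀
      have g2 := hee q y₀ hq hy₀
      omega
    obtain ⟨y1, hy1j, hwy1⟩ := hy1
    obtain ⟨y2, hy2j, hwy2⟩ := hy2
    have hX : ∀ x, f x = i → (a x : ℤ) = (a q : ℤ) ∨ (a x : ℤ) = (a p : ℤ) := by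
      intro x hx
      rcases hxy3 x y1 hx hy1j with ⟨-, h1⟩ | ⟨-, h1⟩ | ⟨-, h1⟩ <;>
        rcases hxy3 x y2 hx hy2j with ⟨-, h2⟩ | ⟨-, h2⟩ | ⟨-, h2⟩ <;> omega
    have hevq : ∀ x, f x = i → (a x : ℤ) = (a q : ℤ) →
        e x = cnt (fun z : V => f z = j ∧ w z = (a q : ℤ)) := by
      intro x hx hax
      rw [he x]
      refine cnt_congr _ _ fun z => ⟨?_, ?_⟩
      · rintro ⟨hz, h1, h2⟩
        refine ⟨hz, ?_⟩
        rcases hwd z hz with hh | hh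
        · exact hh
        · exact absurd h1 ((hconv x z hx hz).2.1 (by omega)).2
      · rintro ⟨hz, hwz⟩
        exact ⟨hz, (hconv x z hx hz).2.2 (by omega)⟩
    have hevp : ∀ x, f x = i → (a x : ℤ) = (a p : ℤ) →
        e x = cnt (fun z : V => f z = j ∧ w z = (a p : ℤ)) := by
      intro x hx hax
      rw [he x]
      refine cnt_congr _ _ fun z => ⟨?_, ?_⟩
      · rintro ⟨hz, h1, h2⟩
        refine ⟨hz, ?_⟩
        rcases hwd z hz with hh | hh
        · exact absurd h2 ((hconv x z hx hz).1 (by omega)).2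
        · exact hh
      · rintro ⟨hz, hwz⟩
        exact ⟨hz, (hconv x z hx hz).2.2 (by omega)⟩
    have heq1 : e q = cnt (fun z : V => f z = j ∧ w z = (a q : ℤ)) := hevq q hq rfl
    have hep1 : e p = cnt (fun z : V => f z = j ∧ w z = (a p : ℤ)) := hevp p hp rfl
    have hsum := cnt_split2 (fun z : V => f z = j) (fun z => w z = (a q : ℤ))
    have hc2 : cnt (fun z : V => f z = j ∧ ¬ (w z = (a q : ℤ))) =
        cnt (fun z : V => f z = j ∧ w z = (a p : ℤ)) :=
      cnt_congr _ _ fun z => ⟨fun hz => ⟨hz.1, (hwd z hz.1).resolve_left hz.2⟩,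
        fun hz => ⟨hz.1, fun hh => hδ (by omega)⟩⟩
    have heev : (e p : ℤ) = (e q : ℤ) := by
      rw [hee p y₀ hp hy₀, hee q y₀ hq hy₀]
    have hdiffset : {y | f y = j} \ {y | f y = j ∧ w y = (a p : ℤ)} =
        {y | f y = j ∧ w y = (a q : ℤ)} := by
      ext y
      constructor
      · rintro ⟨h1, h2⟩
        exact ⟨h1, (hwd y h1).resolve_right (fun hh => h2 ⟨h1, hh⟩)⟩
      · rintro ⟨h1, h2⟩
        exact ⟨h1, fun hm => hδ (by have := hm.2; omega)⟩
    refine ⟨{x | f x = i ∧ (a x : ℤ) = (a p : ℤ)}, {y | f y = j ∧ w y = (a p : ℤ)},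
      fun x hx => hx.1, ⟨p, hp, rfl⟩,
      ⟨q, hq, fun hmem => hδ (by have := hmem.2; omega)⟩,
      fun y hy => hy.1, ⟨y2, hy2j, hwy2⟩,
      ⟨y1, hy1j, fun hmem => hδ (by have := hmem.2; omega)⟩, ?_, ?_, ?_, ?_, ?_⟩
    · intro x hx y hy
      exact (hconv x y hx.1 hy.1).2.2 (by have := hx.2; have := hy.2; omega)
    · intro x hx y hy
      have hax : (a x : ℤ) = (a q : ℤ) := by
        rcases hX x hx.1 with hh | hh
        · exact hh
        · exact absurd ⟨hx.1, hh⟩ hx.2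
      have hwy : w y = (a q : ℤ) := by
        rcases hwd y hy.1 with hh | hh
        · exact hh
        · exact absurd ⟨hy.1, hh⟩ hy.2
      exact (hconv x y hx.1 hy.1).2.2 (by omega)
    · intro x hx y hy
      have hwy : w y = (a q : ℤ) := by
        rcases hwd y hy.1 with hh | hh
        · exact hh
        · exact absurd ⟨hy.1, hh⟩ hy.2
      exact (hconv x y hx.1 hy.1).1 (by have := hx.2; omega)
    · intro y hy x hx
      have hax : (a x : ℤ) = (a q : ℤ) := by
        rcases hX x hx.1 with hh | hh
        · exact hh
        · exact absurd ⟨hx.1, hh⟩ hx.2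
      exact (hconv x y hx.1 hy.1).2.1 (by have := hy.2; omega)
    · rw [hdiffset, ncard_cnt]
      have hr := hsizecnt j
      omega
  -- dispatch on the position of a x₁, a x₂ relative to w y₀
  rcases hxy3 x₁ y₀ hx₁ hy₀ with ⟨-, h1⟩ | ⟨-, h1⟩ | ⟨-, h1⟩ <;>
    rcases hxy3 x₂ y₀ hx₂ hy₀ with ⟨-, h2⟩ | ⟨-, h2⟩ | ⟨-, h2⟩
  · exact absurd (by omega : a x₁ = a x₂) hne12
  · exact Or.inr (Or.inl (case1 x₁ x₂ y₀ hx₁ hx₂ hy₀ h1 h2))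
  · exact Or.inr (Or.inr (case2 x₁ x₂ hx₁ hx₂ (by omega)))
  · exact Or.inr (Or.inl (case1 x₂ x₁ y₀ hx₂ hx₁ hy₀ h2 h1))
  · exact absurd (by omega : a x₁ = a x₂) hne12
  · exact Or.inr (Or.inr (case2 x₂ x₁ hx₂ hx₁ (by omega)))
  · exact Or.inr (Or.inr (case2 x₂ x₁ hx₂ hx₁ (by omega)))
  · exact Or.inr (Or.inr (case2 x₁ x₂ hx₁ hx₂ (by omega)))
  · exact absurd (by omega : a x₁ = a x₂) hne12


end Paper
end

section
/- Let Γ be a semicomplete multipartite commutative weakly distance-regular digraph. Then all partite sets of Γ have the same cardinality; that is, the underlying graph of Γ is the complete multipartite graph K^k_m with m≥2 and k≥2 (k partite sets each of size m). -/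
open Set Matrix

namespace Paper

variable {V : Type*} {W : Type*}

lemma hasPath_self (A : V → V → Prop) (x : V) : HasPathOfLength A x x 0 :=
  ⟨fun _ => x, rfl, rfl, fun i hi => absurd hi (Nat.not_lt_zero i)⟩

lemma ddist_self (A : V → V → Prop) (x : V) : ddist A x x = 0 :=
  Nat.sInf_eq_zero.mpr (Or.inl (hasPath_self A x))

lemma tdist_self (A : V → V → Prop) (x : V) : tdist A x x = (0, 0) := by
  simp [tdist, ddist_self]

lemma tdist_swap (A : V → V → Prop) (x y : V) : tdist A y x = (tdist A x y).swap := rfl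

lemma ddist_eq_one (A : V → V → Prop) {x y : V} (hne : x ≠ y) (hA : A x y) :
    ddist A x y = 1 := by
  have h1 : HasPathOfLength A x y 1 := by
    refine ⟨fun n => if n = 0 then x else y, by simp, by simp, ?_⟩
    intro i hi
    interval_cases i
    simpa using hA
  have h0 : ¬ HasPathOfLength A x y 0 := by
    rintro ⟨p, hp0, hpn, -⟩
    exact hne (hp0.symm.trans hpn)
  have hle : ddist A x y ≤ 1 := Nat.sInf_le h1
  have hne0 : ddist A x y ≠ 0 := by
    intro hz
    rcases Nat.sInf_eq_zero.mp hz with h' | h'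
    · exact h0 h'
    · have hmem : (1 : ℕ) ∈ {n | HasPathOfLength A x y n} := h1
      rw [h'] at hmem
      exact hmem
  omega

lemma arc_of_ddist_one (A : V → V → Prop) (hsc : IsStronglyConnected A) {x y : V}
    (h : ddist A x y = 1) : A x y := by
  have hnem : {n | HasPathOfLength A x y n}.Nonempty := hsc x y
  have hmem : HasPathOfLength A x y (ddist A x y) := Nat.sInf_mem hnem
  rw [h] at hmem
  obtain ⟨p, hp0, hp1, hstep⟩ := hmem
  have := hstep 0 one_pos
  rwa [hp0, hp1] at this

lemma pnum_diag (A : V → V → Prop) (d : ℕ × ℕ) (x : V) :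
    pnum A d d.swap x x = {z | tdist A x z = d}.ncard := by
  unfold pnum
  congr 1
  ext z
  simp only [Set.mem_setOf_eq]
  constructor
  · rintro ⟨h1, -⟩; exact h1
  · intro h1; exact ⟨h1, by rw [tdist_swap, h1]⟩

lemma count_tdist_eq [Fintype V] {A : V → V → Prop} (h : IsWDRD A)
    (P : ℕ × ℕ → Prop) (x y : V) :
    {z | P (tdist A x z)}.ncard = {z | P (tdist A y z)}.ncard := by
  classical
  have key : ∀ d : ℕ × ℕ, {z | tdist A x z = d}.ncard = {z | tdist A y z = d}.ncard := by
    intro d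
    have := h.2.2 d d.swap x x y y (by rw [tdist_self, tdist_self])
    rwa [pnum_diag, pnum_diag] at this
  have hset : ∀ (w : V) (Q : ℕ × ℕ → Prop),
      {z | Q (tdist A w z)}.ncard = (Finset.univ.filter (fun z => Q (tdist A w z))).card := by
    intro w Q
    rw [← Set.ncard_coe_finset]
    congr 1
    ext z
    simp
  set D : Finset (ℕ × ℕ) :=
    ((Finset.univ.image (fun z => tdist A x z)) ∪
      (Finset.univ.image (fun z => tdist A y z))).filter P with hD
  have hmap : ∀ w ∈ ({x, y} : Set V), ∀ z ∈ Finset.univ.filter (fun z => P (tdist A w z)),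
      tdist A w z ∈ D := by
    rintro w hw z hz
    rw [Finset.mem_filter] at hz
    rw [hD, Finset.mem_filter, Finset.mem_union]
    refine ⟨?_, hz.2⟩
    rcases hw with hw | hw
    · subst hw; exact Or.inl (Finset.mem_image_of_mem _ (Finset.mem_univ z))
    · simp only [Set.mem_singleton_iff] at hw
      subst hw; exact Or.inr (Finset.mem_image_of_mem _ (Finset.mem_univ z))
  have hfib : ∀ w : V, ∀ d ∈ D,
      ((Finset.univ.filter (fun z => P (tdist A w z))).filter (fun z => tdist A w z = d))
        = Finset.univ.filter (fun z => tdist A w z = d) := by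
    intro w d hd
    have hPd : P d := (Finset.mem_filter.mp hd).2
    ext z
    simp only [Finset.mem_filter, Finset.mem_univ, true_and]
    constructor
    · rintro ⟨-, h2⟩; exact h2
    · intro h2; exact ⟨by rw [h2]; exact hPd, h2⟩
  rw [hset x P, hset y P]
  rw [Finset.card_eq_sum_card_fiberwise (hmap x (by simp)),
    Finset.card_eq_sum_card_fiberwise (hmap y (by simp))]
  refine Finset.sum_congr rfl ?_
  intro d hd
  rw [hfib x d hd, hfib y d hd]
  have := key d
  rw [hset x (fun e => e = d), hset y (fun e => e = d)] at this
  convert this using 3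

/-- all partite sets of a semicomplete multipartite commutative weakly
distance-regular digraph have the same cardinality. -/
theorem statement_7 {V : Type*} [Fintype V] [Nonempty V] (A : V → V → Prop)
    (h : IsCWDRD A) {m : ℕ} (hm : 2 ≤ m) (f : V → Fin m)
    (hp : IsSemicompleteMultipartiteWith A f) :
    ∃ c : ℕ, 2 ≤ c ∧ ∀ i : Fin m, {x | f x = i}.ncard = c := by
  obtain ⟨hirr, hsize, harc⟩ := hp
  have hsc : IsStronglyConnected A := h.1.1
  have hpart : ∀ x : V,
      {z | f z = f x} = {z | (tdist A x z).1 ≠ 1 ∧ (tdist A x z).2 ≠ 1} := by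
    intro x
    ext z
    simp only [Set.mem_setOf_eq]
    by_cases hz : z = x
    · subst hz
      simp [tdist_self]
    constructor
    · intro hf
      have hnoarc : ¬ (A x z ∨ A z x) := by
        intro hor
        exact (harc x z (Ne.symm hz)).mp hor hf.symm
      constructor
      · intro h1
        exact hnoarc (Or.inl (arc_of_ddist_one A hsc h1))
      · intro h1
        exact hnoarc (Or.inr (arc_of_ddist_one A hsc h1))
    · intro ⟨h1, h2⟩
      by_contra hf
      have : f x ≠ f z := fun he => hf he.symm
      rcases (harc x z (Ne.symm hz)).mpr this with ha | ha
      · exact h1 (ddist_eq_one A (Ne.symm hz) ha)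
      · exact h2 (ddist_eq_one A hz ha)
  obtain ⟨x₀⟩ := ‹Nonempty V›
  refine ⟨{z | f z = f x₀}.ncard, hsize (f x₀), ?_⟩
  intro i
  have hnem : {x | f x = i}.Nonempty := by
    rcases Set.eq_empty_or_nonempty {x | f x = i} with he | hne
    · have := hsize i
      rw [he] at this
      simp at this
    · exact hne
  obtain ⟨xi, hxi⟩ := hnem
  have e1 : {x | f x = i} = {z | f z = f xi} := by
    rw [← hxi]
  rw [e1, hpart xi, hpart x₀]
  exact count_tdist_eq h.1 (fun d => d.1 ≠ 1 ∧ d.2 ≠ 1) xi x₀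

end Paper
end
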